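/- arXiv:1708.06512 — 2 statements merged into one kernel-verified Lean document; each statement's English description precedes it below -/
import Mathlib

section
/- Let G and H be homogeneous polynomials of degree 2 in ℂ[x,y,z,u,v] and set F = y·z² + u·G + v·H (a homogeneous cubic form in five variables). Assume F is nonsingular, i.e. the only common zero in ℂ⁵ of the five partial derivatives of F is the origin. Then for every triple (α,β,γ) ∈ ℂ³, if the polynomial F(r, s, α·t, β·t, γ·t) ∈ ℂ[r,s,t], obtained by substituting x=r, y=s, z=α·t, u=β·t, v=γ·t, is divisible by t², then β = 0 and γ = 0. -/
open MvPolynomial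

private lemma eval_smul_of_isHomogeneous {σ : Type*} {φ : MvPolynomial σ ℂ} {n : ℕ}
    (h : φ.IsHomogeneous n) (c : ℂ) (x : σ → ℂ) :
    eval (fun i => c * x i) φ = c ^ n * eval x φ := by
  rw [eval_eq, eval_eq, Finset.mul_sum]
  apply Finset.sum_congr rfl
  intro d hd
  rw [mem_support_iff] at hd
  have hdeg : ∑ i ∈ d.support, d i = n := by
    have := h hd
    simpa [Finsupp.weight_apply, Finsupp.sum] using this
  calc coeff d φ * ∏ i ∈ d.support, (c * x i) ^ d i
      = coeff d φ * ((∏ i ∈ d.support, c ^ d i) * ∏ i ∈ d.support, (x i) ^ d i) := by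
        rw [← Finset.prod_mul_distrib]; simp [mul_pow]
    _ = c ^ n * (coeff d φ * ∏ i ∈ d.support, (x i) ^ d i) := by
        rw [Finset.prod_pow_eq_pow_sum, hdeg]; ring

private lemma eval_comp_aux {n : ℕ} (Q : MvPolynomial (Fin n) ℂ) (w : Fin n → Polynomial ℂ)
    (t : ℂ) :
    Polynomial.eval t (MvPolynomial.aeval w Q) = eval (fun i => Polynomial.eval t (w i)) Q := by
  have h1 : Polynomial.eval t (MvPolynomial.aeval w Q)
      = (Polynomial.aeval t) (MvPolynomial.aeval w Q) := by
    rw [Polynomial.coe_aeval_eq_eval]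
  have h2 : (fun i => (Polynomial.aeval t) (w i)) = fun i => Polynomial.eval t (w i) := by
    funext i; rw [Polynomial.coe_aeval_eq_eval]
  rw [h1, comp_aeval_apply, h2]
  rfl

/-- Root existence: a homogeneous quadric in 5 variables, restricted to the
(x,y)-plane, has a nontrivial zero there. -/
private lemma exists_nontrivial_zero (Q : MvPolynomial (Fin 5) ℂ) (hQ : Q.IsHomogeneous 2) :
    ∃ a b : ℂ, ¬(a = 0 ∧ b = 0) ∧ eval ![a, b, 0, 0, 0] Q = 0 := by
  set p : Polynomial ℂ :=
    MvPolynomial.aeval ![(Polynomial.X : Polynomial ℂ), 1, 0, 0, 0] Q with hp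
  have hpe : ∀ t : ℂ, p.eval t = eval ![t, 1, 0, 0, 0] Q := by
    intro t
    have hfun : (fun i => Polynomial.eval t ((![Polynomial.X, 1, 0, 0, 0] : Fin 5 → Polynomial ℂ) i)) = ![t, 1, 0, 0, 0] := by
      funext i; fin_cases i <;> simp
    rw [hp, eval_comp_aux, hfun]
  by_cases hp0 : p = 0
  · exact ⟨0, 1, by simp, by rw [← hpe 0, hp0]; simp⟩
  by_cases hdeg : p.degree = 0
  · -- p is a nonzero constant c; use homogeneity to show Q(1,0,0,0,0) = 0
    set c : ℂ := p.coeff 0 with hc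
    have hpc : p = Polynomial.C c := Polynomial.eq_C_of_degree_le_zero (le_of_eq hdeg)
    set q : Polynomial ℂ :=
      MvPolynomial.aeval ![1, (Polynomial.X : Polynomial ℂ), 0, 0, 0] Q with hq
    have hqe : ∀ s : ℂ, q.eval s = eval ![1, s, 0, 0, 0] Q := by
      intro s
      have hfun : (fun i => Polynomial.eval s ((![1, Polynomial.X, 0, 0, 0] : Fin 5 → Polynomial ℂ) i)) = ![1, s, 0, 0, 0] := by
        funext i; fin_cases i <;> simp
      rw [hq, eval_comp_aux, hfun]
    have hagree : ∀ s : ℂ, s ≠ 0 → q.eval s = (Polynomial.C c * Polynomial.X ^ 2).eval s := by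
      intro s hs
      have hvec : (fun i => s * (![s⁻¹, 1, 0, 0, 0] : Fin 5 → ℂ) i) = ![1, s, 0, 0, 0] := by
        funext i
        fin_cases i <;> simp [mul_inv_cancel₀ hs]
      have := eval_smul_of_isHomogeneous hQ s ![s⁻¹, 1, 0, 0, 0]
      rw [hvec] at this
      rw [hqe s, this, ← hpe s⁻¹, hpc]
      simp
      ring
    have hqeq : q = Polynomial.C c * Polynomial.X ^ 2 := by
      apply Polynomial.eq_of_infinite_eval_eq
      apply Set.Infinite.mono (s := {x : ℂ | x ≠ 0})
      · intro s hs
        exact hagree s hs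
      · have : ({x : ℂ | x ≠ 0}) = ({0} : Set ℂ)ᶜ := by ext x; simp
        rw [this]
        exact (Set.finite_singleton 0).infinite_compl
    refine ⟨1, 0, by simp, ?_⟩
    have := hqe 0
    rw [hqeq] at this
    simpa using this.symm
  · have hpos : 0 < p.degree :=
      lt_of_le_of_ne (Polynomial.zero_le_degree_iff.mpr hp0) (Ne.symm hdeg)
    obtain ⟨t, ht⟩ := Complex.exists_root hpos
    exact ⟨t, 1, by simp, by rw [← hpe t]; exact ht⟩

/-- If `F = y·z² + u·G + v·H` is a nonsingular cubic form (G, H homogeneous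
quadrics in 5 variables), then for every `(α,β,γ) ∈ ℂ³`, if the substitution
`x=r, y=s, z=α·t, u=β·t, v=γ·t` makes `F` divisible by `t²`, then `β = 0` and `γ = 0`. -/
theorem only_one_line_through_second_type_line
    (G H F : MvPolynomial (Fin 5) ℂ)
    (hG : G.IsHomogeneous 2) (hH : H.IsHomogeneous 2)
    (hF : F = X 1 * (X 2) ^ 2 + X 3 * G + X 4 * H)
    (hsmooth : ∀ p : Fin 5 → ℂ, (∀ i : Fin 5, eval p (pderiv i F) = 0) → p = 0)
    (α β γ : ℂ)
    (hdiv : (X 2 : MvPolynomial (Fin 3) ℂ) ^ 2 ∣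
      aeval ![X 0, X 1, C α * X 2, C β * X 2, C γ * X 2] F) :
    β = 0 ∧ γ = 0 := by
  -- Step 1: the coefficient of t in the substituted polynomial gives a pointwise identity
  have key : ∀ a b : ℂ, β * eval ![a, b, 0, 0, 0] G + γ * eval ![a, b, 0, 0, 0] H = 0 := by
    intro a b
    obtain ⟨k, hk⟩ := hdiv
    rw [hF] at hk
    simp only [map_add, map_mul, map_pow, aeval_X, aeval_C, Matrix.cons_val_zero,
      Matrix.cons_val_one, Matrix.head_cons, Matrix.cons_val_two, Matrix.cons_val_three,
      Matrix.cons_val_four, Matrix.vecTail, Matrix.vecHead, Function.comp,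
      Matrix.cons_val_succ] at hk
    have h2 := congrArg (MvPolynomial.aeval (R := ℂ)
      ![Polynomial.C a, Polynomial.C b, (Polynomial.X : Polynomial ℂ)]) hk
    simp only [map_add, map_mul, map_pow, aeval_X, aeval_C, comp_aeval_apply,
      Matrix.cons_val_zero, Matrix.cons_val_one, Matrix.head_cons, Matrix.cons_val_two,
      Matrix.cons_val_three, Matrix.cons_val_four, Matrix.vecTail, Matrix.vecHead,
      Function.comp, Matrix.cons_val_succ, Polynomial.algebraMap_eq] at h2
    set w : Fin 5 → Polynomial ℂ :=
      ![Polynomial.C a, Polynomial.C b, Polynomial.C α * Polynomial.X,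
        Polynomial.C β * Polynomial.X, Polynomial.C γ * Polynomial.X] with hwdef
    have hw : (fun i => (MvPolynomial.aeval
        ![Polynomial.C a, Polynomial.C b, (Polynomial.X : Polynomial ℂ)])
        ((![X 0, X 1, C α * X 2, C β * X 2, C γ * X 2] : Fin 5 → MvPolynomial (Fin 3) ℂ) i))
        = w := by
      funext i
      fin_cases i <;> simp [hwdef, Polynomial.algebraMap_eq]
    rw [hw] at h2
    have h4 : Polynomial.X * (Polynomial.C b * Polynomial.C α ^ 2 * Polynomial.X
        + Polynomial.C β * MvPolynomial.aeval w G + Polynomial.C γ * MvPolynomial.aeval w H)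
        = Polynomial.X * (Polynomial.X *
            MvPolynomial.aeval ![Polynomial.C a, Polynomial.C b, Polynomial.X] k) := by
      linear_combination h2
    have h5 := mul_left_cancel₀ (Polynomial.X_ne_zero) h4
    have h6 := congrArg (Polynomial.eval 0) h5
    have hv : (fun i => Polynomial.eval 0 (w i)) = ![a, b, 0, 0, 0] := by
      funext i
      fin_cases i <;> simp [hwdef]
    simp only [Polynomial.eval_add, Polynomial.eval_mul, Polynomial.eval_C, Polynomial.eval_X,
      eval_comp_aux, hv, mul_zero, zero_mul, add_zero, zero_add] at h6
    linear_combination h6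
  -- Step 2: if (β,γ) ≠ 0, produce a nontrivial common zero of G and H on the line
  by_contra hcon
  rw [not_and_or] at hcon
  have hobt : ∃ a b : ℂ, ¬(a = 0 ∧ b = 0) ∧
      eval ![a, b, 0, 0, 0] G = 0 ∧ eval ![a, b, 0, 0, 0] H = 0 := by
    by_cases hγ : γ = 0
    · have hβ : β ≠ 0 := by
        rcases hcon with h | h
        · exact h
        · exact absurd hγ h
      obtain ⟨a, b, hab, hh⟩ := exists_nontrivial_zero H hH
      have hk := key a b
      rw [hh, hγ] at hk
      simp [mul_eq_zero] at hk
      refine ⟨a, b, hab, ?_, hh⟩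
      rcases hk with h | h
      · exact absurd h hβ
      · exact h
    · obtain ⟨a, b, hab, hg⟩ := exists_nontrivial_zero G hG
      have hk := key a b
      rw [hg] at hk
      simp [mul_eq_zero] at hk
      refine ⟨a, b, hab, hg, ?_⟩
      rcases hk with h | h
      · exact absurd h hγ
      · exact h
  obtain ⟨a, b, hab, hg, hh⟩ := hobt
  -- Step 3: that point is singular, contradicting smoothness
  have hz : (![a, b, 0, 0, 0] : Fin 5 → ℂ) = 0 := by
    apply hsmooth
    intro i
    rw [hF]
    fin_cases i <;>
      simp [pderiv_mul, pderiv_pow, pderiv_X, Pi.single, Function.update, hg, hh]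
  apply hab
  constructor
  · have := congrFun hz 0
    simpa using this
  · have := congrFun hz 1
    simpa using this
end

section
/- Let G and H be homogeneous polynomials of degree 2 in ℂ[x,y,z,u,v], set F = y·z² + u·G + v·H, and define the binary quadratic forms A(x,y) := G(x,y,0,0,0) and B(x,y) := H(x,y,0,0,0). If A and B are linearly dependent over ℂ (i.e. they do not form a linearly independent family), then F has a nonzero singular point: there exists p ∈ ℂ⁵ with p ≠ 0 at which all five partial derivatives of F vanish. (Such a point can be taken of the form (x₀, y₀, 0, 0, 0) where (x₀,y₀) ≠ (0,0) is a common zero of A and B.) -/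
open MvPolynomial

lemma eval_smul_homog {n : ℕ} {φ : MvPolynomial (Fin 5) ℂ} (hφ : φ.IsHomogeneous n)
    (s : ℂ) (v : Fin 5 → ℂ) : eval (s • v) φ = s ^ n * eval v φ := by
  rw [eval_eq, eval_eq, Finset.mul_sum]
  apply Finset.sum_congr rfl
  intro d hd
  have hdeg : ∑ i ∈ d.support, d i = n := by
    have := hφ (mem_support_iff.mp hd)
    simpa [Finsupp.weight_apply, Finsupp.sum] using this
  have : ∏ i ∈ d.support, (s • v) i ^ d i
      = s ^ n * ∏ i ∈ d.support, v i ^ d i := by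
    simp only [Pi.smul_apply, smul_eq_mul, mul_pow]
    rw [Finset.prod_mul_distrib, Finset.prod_pow_eq_pow_sum, hdeg]
  rw [this]; ring

lemma eval_aeval5 (g : Fin 5 → Polynomial ℂ) (G : MvPolynomial (Fin 5) ℂ) (t : ℂ) :
    (aeval g G).eval t = eval (fun i => (g i).eval t) G := by
  induction G using MvPolynomial.induction_on with
  | C a => simp
  | add p r hp hr => simp only [map_add, Polynomial.eval_add, eval_add, hp, hr]
  | mul_X p i hp => simp only [map_mul, aeval_X, Polynomial.eval_mul, eval_mul, eval_X, hp]

lemma eval_aeval2 (g : Fin 5 → MvPolynomial (Fin 2) ℂ) (G : MvPolynomial (Fin 5) ℂ)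
    (q : Fin 2 → ℂ) :
    eval q (aeval g G) = eval (fun i => eval q (g i)) G := by
  induction G using MvPolynomial.induction_on with
  | C a => simp
  | add p r hp hr => simp only [map_add, eval_add, hp, hr]
  | mul_X p i hp => simp only [map_mul, aeval_X, eval_mul, eval_X, hp]

lemma exists_common_style_zero (G : MvPolynomial (Fin 5) ℂ) (hG : G.IsHomogeneous 2) :
    ∃ a b : ℂ, ¬(a = 0 ∧ b = 0) ∧ eval ![a, b, 0, 0, 0] G = 0 := by
  set φ : Polynomial ℂ := aeval ![Polynomial.X, 1, 0, 0, 0] G with hφdef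
  have hφ : ∀ t : ℂ, φ.eval t = eval ![t, 1, 0, 0, 0] G := by
    intro t
    rw [hφdef, eval_aeval5]
    have : (fun i => (![Polynomial.X, 1, 0, 0, 0] i).eval t) = ![t, (1:ℂ), 0, 0, 0] := by
      funext i; fin_cases i <;> simp
    rw [this]
  by_cases hroot : ∃ t, φ.IsRoot t
  · obtain ⟨t₀, ht₀⟩ := hroot
    exact ⟨t₀, 1, by simp, by rw [← hφ t₀]; exact ht₀⟩
  · push_neg at hroot
    have hdeg : φ.degree ≤ 0 := by
      by_contra h
      push_neg at h
      obtain ⟨z, hz⟩ := Complex.exists_root h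
      exact hroot z hz
    set c : ℂ := φ.coeff 0 with hc
    have hφc : φ = Polynomial.C c := Polynomial.eq_C_of_degree_le_zero hdeg
    set ψ : Polynomial ℂ := aeval ![1, Polynomial.X, 0, 0, 0] G with hψdef
    have hψ : ∀ s : ℂ, ψ.eval s = eval ![(1:ℂ), s, 0, 0, 0] G := by
      intro s
      rw [hψdef, eval_aeval5]
      have : (fun i => (![1, Polynomial.X, 0, 0, 0] i).eval s) = ![(1:ℂ), s, 0, 0, 0] := by
        funext i; fin_cases i <;> simp
      rw [this]
    have key : ∀ s : ℂ, s ≠ 0 → ψ.eval s = c * s ^ 2 := by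
      intro s hs
      have hvec : (s • ![s⁻¹, 1, 0, 0, 0] : Fin 5 → ℂ) = ![1, s, 0, 0, 0] := by
        funext i
        fin_cases i <;> simp [mul_inv_cancel₀ hs]
      have := eval_smul_homog hG s ![s⁻¹, 1, 0, 0, 0]
      rw [hvec] at this
      rw [hψ, this, ← hφ, hφc]
      simp [mul_comm]
    have hψeq : ψ = Polynomial.C c * Polynomial.X ^ 2 := by
      have hzero : ψ - Polynomial.C c * Polynomial.X ^ 2 = 0 := by
        apply Polynomial.eq_zero_of_infinite_isRoot
        refine Set.Infinite.mono ?_ ((Set.finite_singleton (0:ℂ)).infinite_compl)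
        intro s hs
        simp only [Set.mem_compl_iff, Set.mem_singleton_iff] at hs
        simp only [Set.mem_setOf_eq, Polynomial.IsRoot, Polynomial.eval_sub,
          Polynomial.eval_mul, Polynomial.eval_C, Polynomial.eval_pow, Polynomial.eval_X]
        rw [key s hs]; ring
      exact sub_eq_zero.mp hzero
    refine ⟨1, 0, by simp, ?_⟩
    have := hψ 0
    rw [hψeq] at this
    simpa using this.symm

/-- With `F = y·z² + u·G + v·H` and the binary quadratic forms
`A(x,y) = G(x,y,0,0,0)`, `B(x,y) = H(x,y,0,0,0)`, if `A` and `B` are linearly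
dependent over ℂ, then `F` has a nonzero singular point. -/
theorem singular_of_dependent_quadrics
    (G H F : MvPolynomial (Fin 5) ℂ)
    (hG : G.IsHomogeneous 2) (hH : H.IsHomogeneous 2)
    (hF : F = X 1 * (X 2) ^ 2 + X 3 * G + X 4 * H)
    (A B : MvPolynomial (Fin 2) ℂ)
    (hA : A = aeval ![X 0, X 1, 0, 0, 0] G)
    (hB : B = aeval ![X 0, X 1, 0, 0, 0] H)
    (hdep : ¬ LinearIndependent ℂ ![A, B]) :
    ∃ p : Fin 5 → ℂ, p ≠ 0 ∧ ∀ i : Fin 5, eval p (pderiv i F) = 0 := by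
  have hfun : ∀ (a b : ℂ), (fun i => eval ![a, b] ((![X 0, X 1, 0, 0, 0] :
      Fin 5 → MvPolynomial (Fin 2) ℂ) i)) = ![a, b, 0, 0, 0] := by
    intro a b; funext i; fin_cases i <;> simp
  have hAB : ∀ a b : ℂ, eval ![a, b] A = eval ![a, b, 0, 0, 0] G := by
    intro a b; rw [hA, eval_aeval2, hfun]
  have hBB : ∀ a b : ℂ, eval ![a, b] B = eval ![a, b, 0, 0, 0] H := by
    intro a b; rw [hB, eval_aeval2, hfun]
  rw [LinearIndependent.pair_iff] at hdep
  push_neg at hdep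
  obtain ⟨s, t, hst, hne⟩ := hdep
  have hcz : ∃ a b : ℂ, ¬(a = 0 ∧ b = 0) ∧
      eval ![a, b, 0, 0, 0] G = 0 ∧ eval ![a, b, 0, 0, 0] H = 0 := by
    by_cases ht : t = 0
    · subst ht
      have hs : s ≠ 0 := fun h => by simp [h] at hne
      have hA0 : A = 0 := by
        have : s • A = 0 := by simpa using hst
        simpa [hs] using this
      obtain ⟨a, b, h1, h2⟩ := exists_common_style_zero H hH
      refine ⟨a, b, h1, ?_, h2⟩
      rw [← hAB, hA0, map_zero]
    · obtain ⟨a, b, h1, h2⟩ := exists_common_style_zero G hG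
      refine ⟨a, b, h1, h2, ?_⟩
      have hevA : eval ![a, b] A = 0 := by rw [hAB]; exact h2
      have h := congrArg (eval ![a, b]) hst
      simp only [map_add, smul_eval, hevA, mul_zero, zero_add, map_zero] at h
      have : eval ![a, b] B = 0 := by
        rcases mul_eq_zero.mp h with h' | h'
        · exact absurd h' ht
        · exact h'
      rw [← hBB, this]
  obtain ⟨a, b, hab, hGz, hHz⟩ := hcz
  refine ⟨![a, b, 0, 0, 0], ?_, ?_⟩
  · intro h
    exact hab ⟨by simpa using congr_fun h 0, by simpa using congr_fun h 1⟩
  · intro i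
    rw [hF]
    simp [pderiv_mul, pderiv_X, hGz, hHz]
end
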